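/- Let B be a C*-algebra, E a Hilbert B-module, and F a closed ternary subspace of E. Let B_F and B_E be the closed linear spans of {⟨f,f'⟩ : f, f' ∈ F} and {⟨x,y⟩ : x, y ∈ E} respectively. If B_F is hereditary in B_E in the sense that B_F · B_E · B_F ⊆ B_F, then F is ternary hereditary in E: f·⟨x,f'⟩ ∈ F for all f, f' ∈ F and x ∈ E. -/

import Mathlib

open scoped RightActions

/-- The closed linear span of a subset of a topological `ℂ`-module. -/
noncomputable def clSpan {M : Type*} [AddCommMonoid M] [Module ℂ M] [TopologicalSpace M]
    (S : Set M) : Set M :=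
  closure (Submodule.span ℂ S : Set M)

/-- A subset is a (complex) linear subspace. -/
def IsLinearSubspace {M : Type*} [AddCommMonoid M] [Module ℂ M] (K : Set M) : Prop :=
  (0 : M) ∈ K ∧ (∀ x ∈ K, ∀ y ∈ K, x + y ∈ K) ∧ ∀ (c : ℂ), ∀ x ∈ K, c • x ∈ K

/-- A closed two-sided ideal of a C*-algebra `B`. -/
structure IsClosedTwoSidedIdeal {B : Type*} [NonUnitalCStarAlgebra B] (I : Set B) : Prop where
  isClosed : IsClosed I
  subspace : IsLinearSubspace I
  mul_mem_left : ∀ (b : B), ∀ a ∈ I, b * a ∈ I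
  mul_mem_right : ∀ (b : B), ∀ a ∈ I, a * b ∈ I

/-- The December 2024 Mathlib `CStarModule` (right module: `SMul Aᵐᵒᵖ E`, inner product
linear on the right, `⟪x, y <• a⟫ = ⟪x, y⟫ * a`), whose name Mathlib now uses for a left module. -/
class CStarModuleRight (A E : Type*) [NonUnitalSemiring A] [StarRing A] [Module ℂ A]
    [AddCommGroup E] [Module ℂ E] [PartialOrder A] [SMul Aᵐᵒᵖ E] [Norm A] [Norm E]
    extends Inner A E where
  inner_add_right {x} {y} {z} : inner x (y + z) = inner x y + inner x z
  inner_self_nonneg {x} : 0 ≤ inner x x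
  inner_self {x} : inner x x = 0 ↔ x = 0
  inner_op_smul_right {a : A} {x y : E} : inner x (y <• a) = inner x y * a
  inner_smul_right_complex {z : ℂ} {x} {y} : inner x (z • y) = z • inner x y
  star_inner x y : star (inner x y) = inner y x
  norm_eq_sqrt_norm_inner_self x : ‖x‖ = √‖inner x x‖

section HilbertModule

variable (B : Type*) [NonUnitalCStarAlgebra B] [PartialOrder B] [StarOrderedRing B]
variable {E : Type*} [NormedAddCommGroup E] [NormedSpace ℂ E] [SMul Bᵐᵒᵖ E] [CStarModuleRight B E]

/-- `K ⊆ E` is an *ideal submodule* if it is the closed linear span of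
`{x <• i : x ∈ E, i ∈ I}` for some closed two-sided ideal `I` of `B`. -/
def IsIdealSubmodule (K : Set E) : Prop :=
  ∃ I : Set B, IsClosedTwoSidedIdeal I ∧
    K = clSpan {z : E | ∃ x : E, ∃ i ∈ I, z = x <• i}

/-- A *ternary ideal* of a Hilbert `B`-module `E`: a linear subspace `K` with
`x <• ⟪k, y⟫ ∈ K` for all `x y ∈ E` and `k ∈ K`. -/
def IsTernaryIdeal (K : Set E) : Prop :=
  IsLinearSubspace K ∧ ∀ (x y : E), ∀ k ∈ K, x <• (inner B k y : B) ∈ K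

/-- `B_S`: the closed linear span in `B` of all inner products of elements of `S`. -/
noncomputable def rangeIdeal (S : Set E) : Set B :=
  clSpan {b : B | ∃ k ∈ S, ∃ k' ∈ S, b = (inner B k k' : B)}

/-- The orthogonal complement of a subset of a Hilbert `B`-module. -/
def perp (S : Set E) : Set E :=
  {x : E | ∀ s ∈ S, (inner B x s : B) = 0}

end HilbertModule

/-!
`B_F` is a closed ⋆-subalgebra of `B` (the ternary property gives
`⟨k, k'⟩⟨m, m'⟩ = ⟨k, k'⟨m, m'⟩⟩`) containing `⟨f, f⟩` for every `f ∈ F`. Since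
`‖f u - f‖² = ‖(1 - u)⋆⟨f, f⟩(1 - u)‖`, functional calculus on `⟨f, f⟩` yields `u ∈ B_F` with
`f u` arbitrarily close to `f`. Hence `f⟨x, f'⟩` is a limit of `(f u)⟨x, f' v⟩ = f (u⟨x, f'⟩v)`
with `u, v ∈ B_F`; heredity puts `u⟨x, f'⟩v` in `B_F`, and `F B_F ⊆ F` because `F` is closed
and ternary.
-/

namespace CStarModuleRight

variable {B : Type*} [NonUnitalCStarAlgebra B] [PartialOrder B]
variable {E : Type*} [NormedAddCommGroup E] [NormedSpace ℂ E] [SMul Bᵐᵒᵖ E] [CStarModuleRight B E]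

open MulOpposite

/-- A right Hilbert `B`-module is a left Hilbert `Bᵐᵒᵖ`-module in Mathlib's sense; this gives
access to the `CStarModule` API, in particular the Cauchy–Schwarz inequality. -/
instance toCStarModuleMulOpposite : CStarModule Bᵐᵒᵖ E where
  inner x y := op (inner B x y)
  inner_add_right := congrArg op inner_add_right
  inner_self_nonneg := inner_self_nonneg (A := B)
  inner_self := op_eq_zero_iff _ |>.trans inner_self
  inner_op_smul_right := congrArg op inner_op_smul_right
  inner_smul_right_complex := congrArg op inner_smul_right_complex
  star_inner x y := congrArg op (star_inner x y)
  norm_eq_sqrt_norm_inner_self := norm_eq_sqrt_norm_inner_self (A := B)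

lemma inner_sub_right {x y z : E} : inner B x (y - z) = inner B x y - inner B x z :=
  congrArg unop (CStarModule.inner_sub_right (A := Bᵐᵒᵖ) (x := x) (y := y) (z := z))

lemma inner_sub_left {x y z : E} : inner B (x - y) z = inner B x z - inner B y z :=
  congrArg unop (CStarModule.inner_sub_left (A := Bᵐᵒᵖ) (x := x) (y := y) (z := z))

lemma inner_op_smul_left {a : B} {x y : E} : inner B (x <• a) y = star a * inner B x y :=
  congrArg unop (CStarModule.inner_op_smul_left (A := Bᵐᵒᵖ) (a := op a) (x := x) (y := y))

variable (B) in
lemma norm_sq_eq (x : E) : ‖x‖ ^ 2 = ‖inner B x x‖ :=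
  CStarModule.norm_sq_eq Bᵐᵒᵖ (x := x)

lemma continuous_inner_right [StarOrderedRing B] (x : E) : Continuous (inner B x ·) :=
  continuous_unop.comp ((CStarModule.innerSL (A := Bᵐᵒᵖ) (E := E)) x).continuous

variable (B) in
lemma ext_inner_left {x y : E} (h : ∀ w : E, inner B w x = inner B w y) : x = y := by
  rw [← sub_eq_zero, ← inner_self (A := B), inner_sub_right, h, sub_self]

lemma add_opSMul (x y : E) (a : B) : (x + y) <• a = x <• a + y <• a :=
  ext_inner_left B fun w => by simp only [inner_op_smul_right, inner_add_right, add_mul]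

lemma opSMul_add (x : E) (a b : B) : x <• (a + b) = x <• a + x <• b :=
  ext_inner_left B fun w => by simp only [inner_op_smul_right, inner_add_right, mul_add]

lemma opSMul_smul (x : E) (c : ℂ) (a : B) : x <• (c • a) = c • (x <• a) :=
  ext_inner_left B fun w => by
    simp only [inner_op_smul_right, inner_smul_right_complex, mul_smul_comm]

lemma opSMul_mul (x : E) (a b : B) : x <• (a * b) = x <• a <• b :=
  ext_inner_left B fun w => by simp only [inner_op_smul_right, mul_assoc]

lemma norm_opSMul_le (x : E) (a : B) : ‖x <• a‖ ≤ ‖x‖ * ‖a‖ := by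
  refine le_of_pow_le_pow_left₀ two_ne_zero (by positivity) ?_
  calc ‖x <• a‖ ^ 2 = ‖star a * inner B x x * a‖ := by
        rw [norm_sq_eq B, inner_op_smul_left, inner_op_smul_right, mul_assoc]
    _ ≤ ‖star a‖ * ‖inner B x x‖ * ‖a‖ := norm_mul₃_le
    _ = (‖x‖ * ‖a‖) ^ 2 := by rw [norm_star, ← norm_sq_eq B]; ring

noncomputable def opSMulCLM (x : E) : B →L[ℂ] E :=
  LinearMap.mkContinuous
    { toFun := (x <• ·)
      map_add' := opSMul_add x
      map_smul' := opSMul_smul x } ‖x‖ (norm_opSMul_le x)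

lemma continuous_opSMul_left (x : E) : Continuous (x <• · : B → E) :=
  (opSMulCLM x).continuous

lemma continuous_opSMul_right (a : B) : Continuous (· <• a : E → E) :=
  AddMonoidHomClass.continuous_of_bound (AddMonoidHom.mk' (· <• a) fun x y => add_opSMul x y a)
    ‖a‖ fun x => (norm_opSMul_le x a).trans_eq (mul_comm _ _)

lemma inner_opSMul_sub_self (x : E) (a : B) :
    inner B (x <• a - x) (x <• a - x) =
      star a * inner B x x * a - star a * inner B x x - inner B x x * a + inner B x x := by
  simp only [inner_sub_left, inner_sub_right, inner_op_smul_left, inner_op_smul_right]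
  noncomm_ring

end CStarModuleRight

section ApproximateUnit

variable {A : Type*} [NonUnitalCStarAlgebra A] [PartialOrder A] [StarOrderedRing A]

/-- In the unitization the element is `(1 - u)⋆ a (1 - u)`. Taking `u = g(a)` with
`g t = min (t / ε) 1`, it is `h(a)` for `h t = t (1 - g t)²`, and `0 ≤ h ≤ ε` on `[0, ∞)`. -/
lemma exists_mem_norm_star_mul_mul_sub_le {S : NonUnitalStarSubalgebra ℂ A}
    (hS : IsClosed (S : Set A)) {a : A} (haS : a ∈ S) (ha : 0 ≤ a) {ε : ℝ} (hε : 0 < ε) :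
    ∃ u ∈ S, ‖star u * a * u - star u * a - a * u + a‖ ≤ ε := by
  set g : ℝ → ℝ := fun t => min (t / ε) 1
  refine ⟨cfcₙ g a, cfcₙ_mem (hs := hS) g haS, ?_⟩
  rw [(cfcₙ_predicate g a).star_eq]
  have hexpr : cfcₙ g a * a * cfcₙ g a - cfcₙ g a * a - a * cfcₙ g a + a =
      cfcₙ (fun t => g t * t * g t - g t * t - t * g t + t) a := by
    rw [cfcₙ_add (fun t => g t * t * g t - g t * t - t * g t) (fun t => t) a,
      cfcₙ_sub (fun t => g t * t * g t - g t * t) (fun t => t * g t) a,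
      cfcₙ_sub (fun t => g t * t * g t) (fun t => g t * t) a,
      cfcₙ_mul (fun t => g t * t) g a, cfcₙ_mul g (fun t => t) a,
      cfcₙ_mul (fun t => t) g a, cfcₙ_id' ℝ a]
  rw [hexpr]
  refine norm_cfcₙ_le fun t ht => ?_
  have ht0 : 0 ≤ t := quasispectrum_nonneg_of_nonneg a ha t ht
  rw [show g t * t * g t - g t * t - t * g t + t = t * (1 - g t) ^ 2 by ring,
    Real.norm_of_nonneg (by positivity)]
  rcases le_total t ε with htε | hεt
  · have hgt : g t = t / ε := min_eq_left ((div_le_one hε).2 htε)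
    have hg1 : (1 - g t) ^ 2 ≤ 1 := by
      rw [hgt]; exact pow_le_one₀ (by linarith [div_le_one_of_le₀ htε hε.le])
        (by linarith [div_nonneg ht0 hε.le])
    nlinarith
  · have hgt : g t = 1 := min_eq_right ((one_le_div hε).2 hεt)
    simp [hgt, hε.le]

end ApproximateUnit

section TernarySubspace

open CStarModuleRight

variable {B : Type*} [NonUnitalCStarAlgebra B] [PartialOrder B]
variable {E : Type*} [NormedAddCommGroup E] [NormedSpace ℂ E] [SMul Bᵐᵒᵖ E] [CStarModuleRight B E]

variable (B) in
def IsTernaryClosed (F : Set E) : Prop :=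
  ∀ f ∈ F, ∀ f' ∈ F, ∀ f'' ∈ F, f <• (inner B f' f'' : B) ∈ F

variable {F : Set E}

lemma inner_mem_rangeIdeal {S : Set E} {k k' : E} (hk : k ∈ S) (hk' : k' ∈ S) :
    inner B k k' ∈ rangeIdeal B S :=
  subset_closure (Submodule.subset_span ⟨k, hk, k', hk', rfl⟩)

def innerSpan (ht : IsTernaryClosed B F) : NonUnitalStarSubalgebra ℂ B where
  __ := Submodule.span ℂ {b : B | ∃ k ∈ F, ∃ k' ∈ F, b = inner B k k'}
  mul_mem' {a b} ha hb := by
    induction ha, hb using Submodule.span_induction₂ with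
    | mem_mem x y hx hy =>
      obtain ⟨k, hk, k', hk', rfl⟩ := hx
      obtain ⟨m, hm, m', hm', rfl⟩ := hy
      exact Submodule.subset_span
        ⟨k, hk, k' <• inner B m m', ht k' hk' m hm m' hm', inner_op_smul_right.symm⟩
    | zero_left => simp
    | zero_right => simp
    | add_left _ _ _ _ _ _ h₁ h₂ => rw [add_mul]; exact Submodule.add_mem _ h₁ h₂
    | add_right _ _ _ _ _ _ h₁ h₂ => rw [mul_add]; exact Submodule.add_mem _ h₁ h₂
    | smul_left c _ _ _ _ h => rw [smul_mul_assoc]; exact Submodule.smul_mem _ c h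
    | smul_right c _ _ _ _ h => rw [mul_smul_comm]; exact Submodule.smul_mem _ c h
  star_mem' {a} ha := by
    induction ha using Submodule.span_induction with
    | mem x hx =>
      obtain ⟨k, hk, k', hk', rfl⟩ := hx
      exact Submodule.subset_span ⟨k', hk', k, hk, star_inner (A := B) k k'⟩
    | zero => simp
    | add _ _ _ _ h₁ h₂ => rw [star_add]; exact Submodule.add_mem _ h₁ h₂
    | smul c _ _ h => rw [star_smul]; exact Submodule.smul_mem _ _ h

lemma opSMul_mem_of_mem_rangeIdeal (hcl : IsClosed F) (hsub : IsLinearSubspace F)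
    (ht : IsTernaryClosed B F) {f : E} (hf : f ∈ F) {b : B} (hb : b ∈ rangeIdeal B F) :
    f <• b ∈ F := by
  let K : Submodule ℂ E :=
    { carrier := F
      add_mem' := fun ha hb => hsub.2.1 _ ha _ hb
      zero_mem' := hsub.1
      smul_mem' := hsub.2.2 }
  have hspan : Submodule.span ℂ {b : B | ∃ k ∈ F, ∃ k' ∈ F, b = inner B k k'} ≤
      K.comap (opSMulCLM (B := B) f).toLinearMap := by
    rw [Submodule.span_le]
    rintro _ ⟨k, hk, k', hk', rfl⟩
    exact ht f hf k hk k' hk'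
  exact closure_minimal hspan (hcl.preimage (opSMulCLM f).continuous) hb

lemma mem_closure_opSMul_rangeIdeal [StarOrderedRing B] (ht : IsTernaryClosed B F) {f : E}
    (hf : f ∈ F) : f ∈ closure ((f <• ·) '' rangeIdeal B F) := by
  rw [Metric.mem_closure_iff]
  intro ε hε
  -- the carrier of `(innerSpan ht).topologicalClosure` is `rangeIdeal B F`
  obtain ⟨u, hu, hle⟩ := exists_mem_norm_star_mul_mul_sub_le
    (innerSpan ht).isClosed_topologicalClosure (inner_mem_rangeIdeal hf hf)
    (inner_self_nonneg (A := B)) (ε := (ε / 2) ^ 2) (by positivity)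
  refine ⟨f <• u, ⟨u, hu, rfl⟩, ?_⟩
  have hsq : ‖f <• u - f‖ ^ 2 ≤ (ε / 2) ^ 2 := by rwa [norm_sq_eq B, inner_opSMul_sub_self]
  rw [dist_comm, dist_eq_norm]
  linarith [le_of_pow_le_pow_left₀ two_ne_zero (by positivity) hsq]

lemma IsClosed.map_mem_of_forall_opSMul_mem [StarOrderedRing B] (hcl : IsClosed F)
    (ht : IsTernaryClosed B F) {g : E → E} (hg : Continuous g) {f : E} (hf : f ∈ F)
    (h : ∀ u ∈ rangeIdeal B F, g (f <• u) ∈ F) : g f ∈ F :=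
  hcl.closure_subset <| map_mem_closure hg (mem_closure_opSMul_rangeIdeal ht hf) <| by
    rintro _ ⟨u, hu, rfl⟩
    exact h u hu

end TernarySubspace

theorem ternary_hereditary_of_hereditary_rangeIdeal_general
    {B : Type*} [NonUnitalCStarAlgebra B] [PartialOrder B] [StarOrderedRing B]
    {E : Type*} [NormedAddCommGroup E] [NormedSpace ℂ E] [SMul Bᵐᵒᵖ E]
    [CStarModuleRight B E] (F : Set E) (hcl : IsClosed F) (hsub : IsLinearSubspace F)
    (ht : ∀ f ∈ F, ∀ f' ∈ F, ∀ f'' ∈ F, f <• (inner B f' f'' : B) ∈ F)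
    (hher : ∀ a ∈ rangeIdeal B F, ∀ b ∈ rangeIdeal B (Set.univ : Set E),
      ∀ a' ∈ rangeIdeal B F, a * b * a' ∈ rangeIdeal B F) :
    ∀ f ∈ F, ∀ f' ∈ F, ∀ x : E, f <• (inner B x f' : B) ∈ F := by
  intro f hf f' hf' x
  have hcorner : ∀ u ∈ rangeIdeal B F, f <• u <• inner B x f' ∈ F := fun u hu =>
    hcl.map_mem_of_forall_opSMul_mem ht
      ((CStarModuleRight.continuous_opSMul_left _).comp (CStarModuleRight.continuous_inner_right x))
      hf' fun v hv => by
        rw [Function.comp_apply, CStarModuleRight.inner_op_smul_right,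
          ← CStarModuleRight.opSMul_mul, ← mul_assoc]
        exact opSMul_mem_of_mem_rangeIdeal hcl hsub ht hf
          (hher u hu _ (inner_mem_rangeIdeal trivial trivial) v hv)
  exact hcl.map_mem_of_forall_opSMul_mem ht (CStarModuleRight.continuous_opSMul_right _) hf hcorner

/-- if `B_F` is hereditary in `B_E` (`B_F · B_E · B_F ⊆ B_F`), then the
closed ternary subspace `F` is ternary hereditary in `E`: `F⟨E,F⟩ ⊆ F`. -/
theorem ternary_hereditary_of_hereditary_rangeIdeal
    {B : Type*} [NonUnitalCStarAlgebra B] [PartialOrder B] [StarOrderedRing B]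
    {E : Type*} [NormedAddCommGroup E] [NormedSpace ℂ E] [SMul Bᵐᵒᵖ E]
    [CStarModuleRight B E] [CompleteSpace E] (F : Set E) (hcl : IsClosed F) (hsub : IsLinearSubspace F)
    (ht : ∀ f ∈ F, ∀ f' ∈ F, ∀ f'' ∈ F, f <• (inner B f' f'' : B) ∈ F)
    (hher : ∀ a ∈ rangeIdeal B F, ∀ b ∈ rangeIdeal B (Set.univ : Set E),
      ∀ a' ∈ rangeIdeal B F, a * b * a' ∈ rangeIdeal B F) :
    ∀ f ∈ F, ∀ f' ∈ F, ∀ x : E, f <• (inner B x f' : B) ∈ F :=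
  ternary_hereditary_of_hereditary_rangeIdeal_general F hcl hsub ht hher
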